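/- arXiv:0901.1451 — 2 statements merged into one kernel-verified Lean document; each statement's English description precedes it below -/
import Mathlib

section
/- Suppose v is a looped marked vertex of the marked graph G and no neighbor of v is marked. Then [G] = B·[G − v] + A·[G^v − v]. -/
open MvPolynomial

/-- A marked graph: a finite vertex set, an adjacency matrix over GF(2)
(the diagonal entry at `v` is 1 iff `v` carries a loop; for `v ≠ w` the `(v,w)` entry
is 1 iff `v` and `w` are adjacent), a designated set of marked vertices, and a number
of free loops. -/
structure MarkedGraph (V : Type) [Fintype V] [DecidableEq V] where
  adj : Matrix V V (ZMod 2)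
  marked : V → Bool
  freeLoops : ℕ

namespace MarkedGraph

variable {V : Type} [Fintype V] [DecidableEq V]

/-- GF(2)-nullity of a square matrix: the dimension of its kernel. -/
noncomputable def nullity {ι : Type*} [Fintype ι] (M : Matrix ι ι (ZMod 2)) : ℕ :=
  Module.finrank (ZMod 2) (LinearMap.ker M.mulVecLin)

/-- The diagonal matrix `Δ_T` over GF(2) whose diagonal entry at `v` is 1 iff `v ∈ T`. -/
def delta (T : Finset V) : Matrix V V (ZMod 2) :=
  Matrix.diagonal fun v => if v ∈ T then 1 else 0

/-- The vertices kept in the submatrix `𝒜(G)_T`: delete each marked vertex whose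
diagonal entry in `𝒜(G) + Δ_T` is 0. -/
def keep (G : MarkedGraph V) (T : Finset V) : Finset V :=
  Finset.univ.filter fun v => ¬ (G.marked v = true ∧ (G.adj + delta T) v v = 0)

/-- The submatrix `𝒜(G)_T` of `𝒜(G) + Δ_T`. -/
def subMat (G : MarkedGraph V) (T : Finset V) :
    Matrix (G.keep T) (G.keep T) (ZMod 2) :=
  fun i j => (G.adj + delta T) i.1 j.1

/-- The marked-graph bracket polynomial `[G] ∈ ℤ[A,B,d]`, where `A = X 0`, `B = X 1`,
`d = X 2`:  `[G] = d^φ ⬝ Σ_{T ⊆ V(G)} A^(n-|T|) B^(|T|) d^(ν(𝒜(G)_T))`. -/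
noncomputable def bracket (G : MarkedGraph V) : MvPolynomial (Fin 3) ℤ :=
  X 2 ^ G.freeLoops *
    ∑ T : Finset V,
      X 0 ^ (Fintype.card V - T.card) * X 1 ^ T.card * X 2 ^ nullity (G.subMat T)

/-- `x` is a neighbor of `v` (no vertex is a neighbor of itself). -/
def nbr (G : MarkedGraph V) (v x : V) : Prop := x ≠ v ∧ G.adj v x = 1

instance (G : MarkedGraph V) (v x : V) : Decidable (G.nbr v x) :=
  inferInstanceAs (Decidable (x ≠ v ∧ G.adj v x = 1))

/-- Delete the vertices in `s`, together with all incident edges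
(marks and free loops unchanged). -/
def delete (G : MarkedGraph V) (s : Finset V) : MarkedGraph {v : V // v ∉ s} where
  adj := fun i j => G.adj i.1 j.1
  marked := fun i => G.marked i.1
  freeLoops := G.freeLoops

/-- The local complement `G^v`: toggle every entry of the adjacency matrix (diagonal
entries included) whose row and column indices are both neighbors of `v`. -/
def localComp (G : MarkedGraph V) (v : V) : MarkedGraph V :=
  { G with adj := fun x y => if G.nbr v x ∧ G.nbr v y then G.adj x y + 1 else G.adj x y }

/-- `G - {v,v}`: remove the loop at `v` (set the diagonal entry at `v` to 0). -/
def removeLoop (G : MarkedGraph V) (v : V) : MarkedGraph V :=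
  { G with adj := fun x y => if x = v ∧ y = v then 0 else G.adj x y }

/-- `G + I`: toggle all loops. -/
def addI (G : MarkedGraph V) : MarkedGraph V :=
  { G with adj := G.adj + 1 }

/-- `G⁺`: adjoin one free loop. -/
def addFreeLoop (G : MarkedGraph V) : MarkedGraph V :=
  { G with freeLoops := G.freeLoops + 1 }

/-- The condition under which the pivot `G^{vw}` toggles the adjacency between `x`
and `y`: `x` is a neighbor of `v`, `y` is a neighbor of `w`, and either `x` is not a
neighbor of `w` or `y` is not a neighbor of `v`. -/
def pivotCond (G : MarkedGraph V) (v w x y : V) : Prop :=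
  G.nbr v x ∧ G.nbr w y ∧ (¬ G.nbr w x ∨ ¬ G.nbr v y)

instance (G : MarkedGraph V) (v w x y : V) : Decidable (G.pivotCond v w x y) :=
  inferInstanceAs (Decidable (G.nbr v x ∧ G.nbr w y ∧ (¬ G.nbr w x ∨ ¬ G.nbr v y)))

/-- The pivot `G^{vw}`: toggle the adjacency between every pair of distinct vertices
`x, y ∉ {v,w}` such that `x` is a neighbor of `v`, `y` is a neighbor of `w`, and
either `x` is not a neighbor of `w` or `y` is not a neighbor of `v`
(loops are unaffected). -/
def pivot (G : MarkedGraph V) (v w : V) : MarkedGraph V :=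
  { G with adj := fun x y =>
      if x ≠ v ∧ x ≠ w ∧ y ≠ v ∧ y ≠ w ∧ x ≠ y ∧
          (G.pivotCond v w x y ∨ G.pivotCond v w y x)
      then G.adj x y + 1 else G.adj x y }

/-- Interchange the neighbors of `v` and `w` in an adjacency matrix, keeping loops
and the edge between `v` and `w` unchanged. -/
def swapAdjacencies (M : Matrix V V (ZMod 2)) (v w : V) : Matrix V V (ZMod 2) :=
  fun x y =>
    if x = y then M x y
    else if (x = v ∧ y = w) ∨ (x = w ∧ y = v) then M x y
    else M (Equiv.swap v w x) (Equiv.swap v w y)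

/-- The marked pivot `G_c^{vw}`: the pivot `G^{vw}` with the marks on `v` and `w`
toggled and the neighbors of `v` and `w` interchanged (loops, the edge between `v`
and `w`, and free loops unchanged). -/
def markedPivot (G : MarkedGraph V) (v w : V) : MarkedGraph V where
  adj := swapAdjacencies (G.pivot v w).adj v w
  marked := fun u => if u = v ∨ u = w then !(G.marked u) else G.marked u
  freeLoops := G.freeLoops

/-- The disjoint union of two marked graphs: block-diagonal adjacency matrix,
each vertex marked as it was, free loops added. -/
def disjUnion {V₁ V₂ : Type} [Fintype V₁] [DecidableEq V₁] [Fintype V₂] [DecidableEq V₂]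
    (G₁ : MarkedGraph V₁) (G₂ : MarkedGraph V₂) : MarkedGraph (V₁ ⊕ V₂) where
  adj := Matrix.fromBlocks G₁.adj 0 0 G₂.adj
  marked := Sum.elim G₁.marked G₂.marked
  freeLoops := G₁.freeLoops + G₂.freeLoops

/-- Remove the three edges `{u,v}`, `{u,w}`, `{v,w}` (all else unchanged). -/
def removeEdges3 (G : MarkedGraph V) (u v w : V) : MarkedGraph V :=
  { G with adj := fun x y =>
      if (x = u ∧ y = v) ∨ (x = v ∧ y = u) ∨ (x = u ∧ y = w) ∨ (x = w ∧ y = u) ∨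
          (x = v ∧ y = w) ∨ (x = w ∧ y = v)
      then 0 else G.adj x y }

/-- Adjoin one isolated, unmarked vertex with no incident edges; it is looped iff
`loop = true`. -/
def addIsolated (G : MarkedGraph V) (loop : Bool) : MarkedGraph (Option V) where
  adj := fun x y =>
    match x, y with
    | some a, some b => G.adj a b
    | none, none => if loop then 1 else 0
    | _, _ => 0
  marked := fun x => match x with | some a => G.marked a | none => false
  freeLoops := G.freeLoops

/-- The number of vertices of `s` that are adjacent to `x`. -/
def countAdj (G : MarkedGraph V) (x : V) (s : Finset V) : ℕ :=
  (s.filter fun y => G.adj x y = 1).card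

/-- The reduced marked-graph bracket `⟨G⟩ ∈ ℤ[A, A⁻¹]`: substitute `B ↦ A⁻¹` and
`d ↦ -A² - A⁻²` in `[G]`. -/
noncomputable def reducedBracket (G : MarkedGraph V) : LaurentPolynomial ℤ :=
  MvPolynomial.aeval
    ![LaurentPolynomial.T 1, LaurentPolynomial.T (-1),
      -LaurentPolynomial.T 2 - LaurentPolynomial.T (-2)] G.bracket

/-- The number of looped vertices of `G`. -/
def numLoops (G : MarkedGraph V) : ℕ :=
  (Finset.univ.filter fun v => G.adj v v = 1).card

/-- The Jones polynomial `V_G = (-1)^n ⬝ q^(3n-6ℓ) ⬝ ⟨G⟩(q⁻¹)`, as a Laurent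
polynomial in the formal variable `q` (representing `t^(1/4)`); substituting
`A ↦ q⁻¹` in `⟨G⟩` amounts to substituting `A ↦ q⁻¹`, `B ↦ q`, `d ↦ -q² - q⁻²`
in `[G]`. -/
noncomputable def jones (G : MarkedGraph V) : LaurentPolynomial ℤ :=
  (-1) ^ Fintype.card V *
    LaurentPolynomial.T (3 * (Fintype.card V : ℤ) - 6 * (G.numLoops : ℤ)) *
    MvPolynomial.aeval
      ![LaurentPolynomial.T (-1), LaurentPolynomial.T 1,
        -LaurentPolynomial.T 2 - LaurentPolynomial.T (-2)] G.bracket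

end MarkedGraph

/-!
Split the state sum of `[G]` according to whether `v ∈ T`. If `v ∈ T`, the diagonal entry of the
marked vertex `v` in `𝒜(G) + Δ_T` is `1 + 1 = 0`, so `v` is deleted and the state is a state of
`G − v`. If `v ∉ T`, that entry is `1`; pivoting on it (a Schur complement over GF(2)) preserves the
nullity, and by symmetry the complement is `𝒜(G^v − v) + Δ_T`. The pivot toggles diagonal entries
only at neighbours of `v`, which are unmarked, so the same vertices are deleted on both sides.
-/

namespace Finset

variable {α M : Type*} [Fintype α] [AddCommMonoid M]

theorem sum_map_subtype_eq_sum_powerset (p : α → Prop) [DecidablePred p] (f : Finset α → M) :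
    ∑ T : Finset {a // p a}, f (T.map (Function.Embedding.subtype p)) =
      ∑ T ∈ (univ.filter p).powerset, f T := by
  refine sum_nbij' (fun T => T.map (Function.Embedding.subtype p)) (fun T => T.subtype p)
    ?_ ?_ ?_ ?_ ?_ <;> intro T hT
  · simp +contextual [subset_iff]
  · exact mem_univ _
  · ext a; simp [a.2]
  · exact subtype_map_of_mem fun a ha => by simpa using mem_powerset.1 hT ha
  · rfl

theorem sum_finset_eq_sum_insert_add_sum [DecidableEq α] (v : α) (f : Finset α → M) :
    ∑ T : Finset α, f T =
      ∑ T : Finset {a // a ∉ ({v} : Finset α)},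
        (f (insert v (T.map (Function.Embedding.subtype _))) +
          f (T.map (Function.Embedding.subtype _))) := by
  have huniv : (univ : Finset α) = insert v (univ.filter (· ∉ ({v} : Finset α))) := by
    ext; simp [em]
  conv_lhs => rw [← powerset_univ, huniv, sum_powerset_insert (by simp), add_comm]
  rw [sum_add_distrib, sum_map_subtype_eq_sum_powerset _ fun T => f (insert v T),
    sum_map_subtype_eq_sum_powerset _ f]

end Finset

namespace Matrix

variable {ι R : Type*} [Fintype ι] [DecidableEq ι] [CommRing R]

/-- Eliminating the pivot `v`; when `M v v = 1` this is the Schur complement of the `1 × 1` block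
at `v`. -/
def schurComplementAt (M : Matrix ι ι R) (v : ι) : Matrix {i // i ≠ v} {i // i ≠ v} R :=
  of fun i j => M i j - M i v * M v j

theorem mulVec_apply_eq_add_sum_ne (M : Matrix ι ι R) (x : ι → R) (i v : ι) :
    (M *ᵥ x) i = M i v * x v + ∑ j : {j // j ≠ v}, M i j * x j :=
  Fintype.sum_eq_add_sum_subtype_ne _ v

theorem schurComplementAt_mulVec {M : Matrix ι ι R} {v : ι} (hv : M v v = 1) (x : ι → R)
    (i : {i // i ≠ v}) :
    (M.schurComplementAt v *ᵥ (x ∘ Subtype.val)) i = (M *ᵥ x) i - M i v * (M *ᵥ x) v := by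
  have hS : (M.schurComplementAt v *ᵥ (x ∘ Subtype.val)) i =
      ∑ j : {j // j ≠ v}, M i j * x j - M i v * ∑ j : {j // j ≠ v}, M v j * x j := by
    simp [mulVec, dotProduct, schurComplementAt, sub_mul, Finset.mul_sum, mul_assoc]
  rw [hS, mulVec_apply_eq_add_sum_ne M x i v, mulVec_apply_eq_add_sum_ne M x v v, hv]
  ring

theorem finrank_ker_mulVecLin_schurComplementAt {M : Matrix ι ι R} {v : ι} (hv : M v v = 1) :
    Module.finrank R (LinearMap.ker (M.schurComplementAt v).mulVecLin) =
      Module.finrank R (LinearMap.ker M.mulVecLin) := by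
  let r : LinearMap.ker M.mulVecLin →ₗ[R] LinearMap.ker (M.schurComplementAt v).mulVecLin :=
    (LinearMap.funLeft R R Subtype.val).restrict fun x hx => by
      replace hx : M *ᵥ x = 0 := hx
      show M.schurComplementAt v *ᵥ (x ∘ Subtype.val) = 0
      ext i
      simp [schurComplementAt_mulVec hv, hx]
  refine (LinearEquiv.ofBijective r ⟨?_, ?_⟩).finrank_eq.symm
  · rw [← LinearMap.ker_eq_bot, LinearMap.ker_eq_bot']
    rintro ⟨x, hx⟩ hrx
    replace hx : M *ᵥ x = 0 := hx
    replace hrx : ∀ i : {i // i ≠ v}, x i = 0 := fun i => congr_fun (congr_arg Subtype.val hrx) i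
    have hxv : x v = 0 := by
      simpa [hv, hrx, hx] using (mulVec_apply_eq_add_sum_ne M x v v).symm
    ext i
    by_cases hi : i = v
    · subst hi; exact hxv
    · exact hrx ⟨i, hi⟩
  · rintro ⟨y, hy⟩
    replace hy : M.schurComplementAt v *ᵥ y = 0 := hy
    let x : ι → R := fun i => if h : i = v then -∑ j : {j // j ≠ v}, M v j * y j else y ⟨i, h⟩
    have hxy : x ∘ Subtype.val = y := funext fun i => dif_neg i.2
    have hxv : (M *ᵥ x) v = 0 := by
      have hxj (j : {j // j ≠ v}) : x j = y j := congr_fun hxy j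
      simp only [mulVec_apply_eq_add_sum_ne M x v v, hv, one_mul, hxj]
      simp [x]
    have hx : M *ᵥ x = 0 := by
      ext i
      by_cases hi : i = v
      · subst hi; exact hxv
      · simpa [hxy, hy, hxv] using (schurComplementAt_mulVec hv x ⟨i, hi⟩).symm
    exact ⟨⟨x, hx⟩, Subtype.ext hxy⟩

end Matrix

namespace MarkedGraph

variable {V : Type} [Fintype V] [DecidableEq V] (G : MarkedGraph V)

theorem nullity_submatrix {ι κ : Type*} [Fintype ι] [Fintype κ]
    (M : Matrix ι ι (ZMod 2)) (e : κ ≃ ι) : nullity (M.submatrix e e) = nullity M := by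
  have hM := M.mulVecLin.finrank_range_add_finrank_ker
  have hMe := (M.submatrix e e).mulVecLin.finrank_range_add_finrank_ker
  rw [← Matrix.rank, Matrix.rank_submatrix] at hMe
  rw [← Matrix.rank] at hM
  simp only [Module.finrank_fintype_fun_eq_card, Fintype.card_congr e] at hM hMe
  unfold nullity
  omega

section delete

variable {s : Finset V} {T : Finset V} {T' : Finset {u // u ∉ s}}

theorem delete_adj_add_delta_apply (hT : ∀ x, x ∈ T' ↔ x.1 ∈ T) (x y : {u // u ∉ s}) :
    ((G.delete s).adj + delta T') x y = (G.adj + delta T) x y := by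
  show G.adj x y + delta T' x y = G.adj x y + delta T x y
  simp [delta, Matrix.diagonal_apply, Subtype.ext_iff, hT]

theorem mem_keep_delete_iff (hT : ∀ x, x ∈ T' ↔ x.1 ∈ T) (x : {u // u ∉ s}) :
    x ∈ (G.delete s).keep T' ↔ x.1 ∈ G.keep T := by
  simp only [keep, Finset.mem_filter, Finset.mem_univ, true_and,
    G.delete_adj_add_delta_apply hT]
  rfl

theorem nullity_subMat_delete (hT : ∀ x, x ∈ T' ↔ x.1 ∈ T) (hs : ∀ u ∈ G.keep T, u ∉ s) :
    nullity ((G.delete s).subMat T') = nullity (G.subMat T) := by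
  let e : G.keep T ≃ (G.delete s).keep T' :=
    { toFun := fun u => ⟨⟨u, hs u u.2⟩, (G.mem_keep_delete_iff hT _).2 u.2⟩
      invFun := fun x => ⟨x.1.1, (G.mem_keep_delete_iff hT _).1 x.2⟩
      left_inv := fun _ => rfl
      right_inv := fun _ => rfl }
  have he : ((G.delete s).subMat T').submatrix e e = G.subMat T := by
    ext i j
    exact G.delete_adj_add_delta_apply hT (e i) (e j)
  rw [← he, nullity_submatrix]

end delete

section localComp

variable {v : V}

theorem localComp_adj_of_ne (hsym : G.adj.IsSymm) {x y : V} (hx : x ≠ v) (hy : y ≠ v) :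
    (G.localComp v).adj x y = G.adj x y + G.adj x v * G.adj v y := by
  have key : ∀ a b c : ZMod 2, (if a = 1 ∧ b = 1 then c + 1 else c) = c + a * b := by decide
  simp only [localComp, nbr, hx, hy, ne_eq, not_false_eq_true, true_and, hsym.apply v x]
  exact key _ _ _

theorem localComp_adj_add_delta_apply (hsym : G.adj.IsSymm) (T : Finset V) {x y : V}
    (hx : x ≠ v) (hy : y ≠ v) :
    ((G.localComp v).adj + delta T) x y =
      (G.adj + delta T) x y - (G.adj + delta T) x v * (G.adj + delta T) v y := by
  have hxv : delta T x v = 0 := Matrix.diagonal_apply_ne _ hx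
  have hvy : delta T v y = 0 := Matrix.diagonal_apply_ne _ hy.symm
  simp only [Matrix.add_apply, hxv, hvy, add_zero, G.localComp_adj_of_ne hsym hx hy,
    ZModModule.sub_eq_add]
  ring

theorem keep_localComp (hnbr : ∀ x, G.nbr v x → G.marked x = false) (T : Finset V) :
    (G.localComp v).keep T = G.keep T := by
  ext x
  have hdiag (hm : G.marked x = true) : (G.localComp v).adj x x = G.adj x x :=
    if_neg fun h => by simp [hnbr x h.1] at hm
  unfold keep
  rw [Finset.mem_filter, Finset.mem_filter]
  simp only [Finset.mem_univ, true_and, Matrix.add_apply]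
  refine not_congr (and_congr_right fun hm => ?_)
  rw [hdiag hm]

end localComp

theorem notMem_keep_of_looped_of_marked {v : V} (hlooped : G.adj v v = 1)
    (hmarked : G.marked v = true) {T : Finset V} (hvT : v ∈ T) : v ∉ G.keep T := by
  have hdiag : (G.adj + delta T) v v = 0 := by
    rw [Matrix.add_apply, hlooped, delta, Matrix.diagonal_apply_eq, if_pos hvT]
    decide
  exact fun h => (Finset.mem_filter.1 h).2 ⟨hmarked, hdiag⟩

theorem nullity_subMat_localComp_delete (hsym : G.adj.IsSymm) {v : V}
    (hlooped : G.adj v v = 1) (hnbr : ∀ x, G.nbr v x → G.marked x = false)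
    {T : Finset V} {T' : Finset {u // u ∉ ({v} : Finset V)}} (hvT : v ∉ T)
    (hT : ∀ x, x ∈ T' ↔ x.1 ∈ T) :
    nullity (((G.localComp v).delete {v}).subMat T') = nullity (G.subMat T) := by
  have hpivot : (G.adj + delta T) v v = 1 := by
    simp [Matrix.add_apply, delta, hlooped, hvT]
  have hvkeep : v ∈ G.keep T :=
    Finset.mem_filter.2 ⟨Finset.mem_univ _, fun h => one_ne_zero (hpivot.symm.trans h.2)⟩
  set v' : G.keep T := ⟨v, hvkeep⟩
  have hmem (x : {u // u ∉ ({v} : Finset V)}) :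
      x ∈ ((G.localComp v).delete {v}).keep T' ↔ x.1 ∈ G.keep T := by
    rw [mem_keep_delete_iff _ hT, keep_localComp G hnbr]
  let e : {i : G.keep T // i ≠ v'} ≃ ((G.localComp v).delete {v}).keep T' :=
    { toFun := fun i =>
        ⟨⟨i.1, Finset.notMem_singleton.2 fun h => i.2 (Subtype.ext h)⟩, (hmem _).2 i.1.2⟩
      invFun := fun x => ⟨⟨x.1.1, (hmem _).1 x.2⟩,
        fun h => Finset.notMem_singleton.1 x.1.2 (congrArg Subtype.val h)⟩
      left_inv := fun _ => rfl
      right_inv := fun _ => rfl }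
  have he : (((G.localComp v).delete {v}).subMat T').submatrix e e =
      (G.subMat T).schurComplementAt v' := by
    ext i j
    exact ((G.localComp v).delete_adj_add_delta_apply hT (e i).1 (e j).1).trans
      (G.localComp_adj_add_delta_apply hsym T (fun h => i.2 (Subtype.ext h))
        (fun h => j.2 (Subtype.ext h)))
  rw [← nullity_submatrix _ e, he]
  exact (G.subMat T).finrank_ker_mulVecLin_schurComplementAt hpivot

end MarkedGraph

/-- If `v` is a looped marked vertex with no marked neighbor then
`[G] = B⬝[G - v] + A⬝[G^v - v]`. -/
theorem bracket_looped_marked {V : Type} [Fintype V] [DecidableEq V]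
    (G : MarkedGraph V) (hsym : G.adj.IsSymm) (v : V)
    (hlooped : G.adj v v = 1) (hmarked : G.marked v = true)
    (hnbr : ∀ x, G.nbr v x → G.marked x = false) :
    G.bracket =
      X 1 * (G.delete {v}).bracket + X 0 * ((G.localComp v).delete {v}).bracket := by
  set W := {u // u ∉ ({v} : Finset V)}
  have hcard : Fintype.card V = Fintype.card W + 1 := by
    have := Fintype.card_pos_iff.2 ⟨v⟩
    simp only [W, Finset.mem_singleton, Fintype.card_subtype_compl, Fintype.card_unique]
    omega
  have hdelete (T' : Finset W) :
      MarkedGraph.nullity (G.subMat (insert v (T'.map (Function.Embedding.subtype _)))) =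
        MarkedGraph.nullity ((G.delete {v}).subMat T') :=
    (G.nullity_subMat_delete (by simp +contextual) fun u hu hv =>
      G.notMem_keep_of_looped_of_marked hlooped hmarked (Finset.mem_insert_self v _)
        (Finset.mem_singleton.1 hv ▸ hu)).symm
  have hlocal (T' : Finset W) :
      MarkedGraph.nullity (G.subMat (T'.map (Function.Embedding.subtype _))) =
        MarkedGraph.nullity (((G.localComp v).delete {v}).subMat T') :=
    (G.nullity_subMat_localComp_delete hsym hlooped hnbr (by simp) (by simp +contextual)).symm
  rw [MarkedGraph.bracket, MarkedGraph.bracket, MarkedGraph.bracket, Finset.sum_finset_eq_sum_insert_add_sum v, Finset.mul_sum,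
    Finset.mul_sum, Finset.mul_sum, Finset.mul_sum, Finset.mul_sum, ← Finset.sum_add_distrib]
  refine Finset.sum_congr rfl fun T' _ => ?_
  have hk : T'.card ≤ Fintype.card W := Finset.card_le_univ T'
  have hvT : v ∉ T'.map (Function.Embedding.subtype _) := by simp
  rw [hdelete, hlocal, Finset.card_insert_of_notMem hvT, Finset.card_map, hcard,
    show Fintype.card W + 1 - (T'.card + 1) = Fintype.card W - T'.card by omega,
    show Fintype.card W + 1 - T'.card = Fintype.card W - T'.card + 1 by omega]
  simp only [MarkedGraph.delete, MarkedGraph.localComp]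
  ring
end

section
/- Let G' be the marked graph obtained from a marked graph G by adjoining one isolated, unmarked vertex with no incident edges; the new vertex may be either looped or unlooped. Then V_{G'} = V_G; that is, the marked-graph Jones polynomial is invariant under the Ω.1 move of adjoining or deleting an isolated unmarked vertex. -/
open MvPolynomial

/-! The new vertex `o` is unmarked, so it survives in every `𝒜(G')_T`, where its row and column
vanish off the diagonal and its diagonal entry is `[o looped] + [o ∈ T]`. Hence `𝒜(G')_T` is
`𝒜(G)_{T \ o}` plus a `1 × 1` block, of nullity one exactly when `o ∈ T` iff `o` is looped.
Summing over `o ∈ T` and `o ∉ T` gives `[G'] = (A d + B) [G]` for an unlooped `o` and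
`[G'] = (A + B d) [G]` for a looped one; these factors become `-q⁻³` and `-q³` in the Jones
substitution, which is exactly cancelled by the change of the normalisation `(-1)^n q^(3n-6ℓ)`. -/

namespace Finset

variable {α : Type*} [DecidableEq α]

def optionEquivProdBool : Finset (Option α) ≃ Finset α × Bool where
  toFun T := (T.eraseNone, decide (none ∈ T))
  invFun p := cond p.2 (insertNone p.1) (p.1.map .some)
  left_inv T := by
    by_cases h : none ∈ T
    · simp [h, insertNone_eraseNone]
    · simp [h, map_some_eraseNone, erase_eq_of_notMem]
  right_inv := by
    rintro ⟨S, _ | _⟩ <;> ext <;> simp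

lemma card_eq_card_eraseNone_add_ite (T : Finset (Option α)) :
    T.card = T.eraseNone.card + if none ∈ T then 1 else 0 := by
  by_cases h : none ∈ T
  · rw [card_eraseNone_eq_card_erase, card_erase_of_mem h, if_pos h,
      Nat.sub_add_cancel (card_pos.2 ⟨_, h⟩)]
  · rw [card_eraseNone_eq_card_erase, erase_eq_of_notMem h, if_neg h, add_zero]

end Finset

namespace MarkedGraph

open Matrix Finset

section Nullity

variable {ι κ : Type*} [Fintype ι] [Fintype κ]

lemma nullity_submatrix_equiv (e : ι ≃ κ) (M : Matrix κ κ (ZMod 2)) :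
    nullity (M.submatrix e e) = nullity M := by
  have hfun : LinearMap.funLeft (ZMod 2) (ZMod 2) e.symm
      = (LinearEquiv.funCongrLeft (ZMod 2) (ZMod 2) e.symm :
          (ι → ZMod 2) →ₗ[ZMod 2] (κ → ZMod 2)) := rfl
  unfold nullity
  rw [mulVecLin_submatrix e e M, ← LinearMap.comp_assoc, LinearMap.ker_comp,
    LinearMap.ker_comp_of_ker_eq_bot M.mulVecLin (LinearMap.ker_eq_bot_of_injective
      (LinearMap.funLeft_injective_of_surjective (ZMod 2) (ZMod 2) e e.surjective)),
    hfun, Submodule.comap_equiv_eq_map_symm, LinearEquiv.finrank_map_eq]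

lemma nullity_fromBlocks_zero (A : Matrix ι ι (ZMod 2)) (D : Matrix κ κ (ZMod 2)) :
    nullity (fromBlocks A 0 0 D) = nullity A + nullity D := by
  have mem_ker : ∀ x : ι ⊕ κ → ZMod 2, x ∈ LinearMap.ker (fromBlocks A 0 0 D).mulVecLin ↔
      x ∘ Sum.inl ∈ LinearMap.ker A.mulVecLin ∧ x ∘ Sum.inr ∈ LinearMap.ker D.mulVecLin := by
    intro x
    simp only [LinearMap.mem_ker, mulVecLin_apply, fromBlocks_mulVec, zero_mulVec, add_zero,
      zero_add, funext_iff, Sum.forall]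
    rfl
  let e : LinearMap.ker (fromBlocks A 0 0 D).mulVecLin ≃ₗ[ZMod 2]
      LinearMap.ker A.mulVecLin × LinearMap.ker D.mulVecLin :=
    { toFun x := (⟨x.1 ∘ Sum.inl, ((mem_ker x).1 x.2).1⟩, ⟨x.1 ∘ Sum.inr, ((mem_ker x).1 x.2).2⟩)
      invFun p := ⟨Sum.elim p.1.1 p.2.1, (mem_ker _).2 ⟨p.1.2, p.2.2⟩⟩
      map_add' _ _ := rfl
      map_smul' _ _ := rfl
      left_inv x := by ext (i | i) <;> rfl
      right_inv _ := rfl }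
  rw [nullity, e.finrank_eq, Module.finrank_prod]
  rfl

lemma nullity_of_unique [Unique ι] (M : Matrix ι ι (ZMod 2)) :
    nullity M = if M default default = 0 then 1 else 0 := by
  have hM : M = diagonal fun _ => M default default := by
    ext i j
    rw [Subsingleton.elim i default, Subsingleton.elim j default, diagonal_apply_eq]
  split_ifs with h
  · rw [h] at hM
    rw [nullity, hM, diagonal_zero, mulVecLin_zero, LinearMap.ker_zero, finrank_top,
      Module.finrank_fintype_fun_eq_card, Fintype.card_unique]
  · have h1 : M default default = 1 := by
      generalize M default default = c at h ⊢
      revert c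
      decide
    rw [h1, diagonal_one] at hM
    rw [nullity, hM, mulVecLin_one, LinearMap.ker_id, finrank_bot]

lemma nullity_option [DecidableEq ι] (M : Matrix (Option ι) (Option ι) (ZMod 2))
    (hcol : ∀ a, M (some a) none = 0) (hrow : ∀ a, M none (some a) = 0) :
    nullity M = nullity (M.submatrix some some) + if M none none = 0 then 1 else 0 := by
  let e : Option ι ≃ ι ⊕ Unit := Equiv.optionEquivSumPUnit ι
  have hblocks : M.submatrix e.symm e.symm
      = fromBlocks (M.submatrix some some) 0 0 (of fun _ _ : Unit => M none none) := by
    ext (i | i) (j | j) <;> simp [e, hcol, hrow]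
  rw [← nullity_submatrix_equiv e.symm M, hblocks, nullity_fromBlocks_zero,
    nullity_of_unique (of fun _ _ : Unit => M none none)]
  rfl

end Nullity

variable {V : Type} [Fintype V] [DecidableEq V] (G : MarkedGraph V) (loop : Bool)

lemma addIsolated_adj_add_delta_submatrix_some (T : Finset (Option V)) :
    ((G.addIsolated loop).adj + delta T).submatrix some some = G.adj + delta T.eraseNone := by
  ext a b
  rw [submatrix_apply, Matrix.add_apply, Matrix.add_apply]
  by_cases hab : a = b <;> simp [addIsolated, delta, hab]

lemma addIsolated_adj_add_delta_some_none (T : Finset (Option V)) (a : V) :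
    ((G.addIsolated loop).adj + delta T) (some a) none = 0 := by
  rw [Matrix.add_apply]
  simp [addIsolated, delta]

lemma addIsolated_adj_add_delta_none_some (T : Finset (Option V)) (a : V) :
    ((G.addIsolated loop).adj + delta T) none (some a) = 0 := by
  rw [Matrix.add_apply]
  simp [addIsolated, delta]

lemma addIsolated_adj_add_delta_none_none (T : Finset (Option V)) :
    ((G.addIsolated loop).adj + delta T) none none
      = (if loop then 1 else 0) + if none ∈ T then 1 else 0 := by
  rw [Matrix.add_apply]
  simp [addIsolated, delta]

lemma none_mem_keep_addIsolated (T : Finset (Option V)) :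
    none ∈ (G.addIsolated loop).keep T := by
  simp [keep, addIsolated]

lemma some_mem_keep_addIsolated (T : Finset (Option V)) (a : V) :
    some a ∈ (G.addIsolated loop).keep T ↔ a ∈ G.keep T.eraseNone := by
  have hdiag := congrFun₂ (G.addIsolated_adj_add_delta_submatrix_some loop T) a a
  simp only [submatrix_apply] at hdiag
  simp only [keep, mem_filter, mem_univ, true_and, hdiag]
  rfl

def keepAddIsolatedEquiv (T : Finset (Option V)) :
    Option (G.keep T.eraseNone) ≃ (G.addIsolated loop).keep T where
  toFun
    | none => ⟨none, G.none_mem_keep_addIsolated loop T⟩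
    | some a => ⟨some a, (G.some_mem_keep_addIsolated loop T a).2 a.2⟩
  invFun
    | ⟨none, _⟩ => none
    | ⟨some a, h⟩ => some ⟨a, (G.some_mem_keep_addIsolated loop T a).1 h⟩
  left_inv := by rintro (_ | _) <;> rfl
  right_inv := by rintro ⟨_ | _, _⟩ <;> rfl

lemma nullity_subMat_addIsolated (T : Finset (Option V)) :
    nullity ((G.addIsolated loop).subMat T)
      = nullity (G.subMat T.eraseNone) + if loop = decide (none ∈ T) then 1 else 0 := by
  let e := G.keepAddIsolatedEquiv loop T
  have hsome : (((G.addIsolated loop).subMat T).submatrix e e).submatrix some some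
      = G.subMat T.eraseNone := by
    ext a b
    exact congrFun₂ (G.addIsolated_adj_add_delta_submatrix_some loop T) a.1 b.1
  have hnone : ((G.addIsolated loop).subMat T).submatrix e e none none
      = (if loop then 1 else 0) + if none ∈ T then 1 else 0 :=
    G.addIsolated_adj_add_delta_none_none loop T
  rw [← nullity_submatrix_equiv e, nullity_option _
    (fun a => G.addIsolated_adj_add_delta_some_none loop T a.1)
    (fun a => G.addIsolated_adj_add_delta_none_some loop T a.1), hsome, hnone]
  by_cases h : none ∈ T <;> cases loop <;> simp [h, CharTwo.add_self_eq_zero]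

lemma bracket_addIsolated :
    (G.addIsolated loop).bracket
      = (if loop then X 0 + X 1 * X 2 else X 0 * X 2 + X 1) * G.bracket := by
  let term : Finset V × Bool → MvPolynomial (Fin 3) ℤ := fun p =>
    X 0 ^ (Fintype.card V + 1 - (p.1.card + if p.2 then 1 else 0))
      * X 1 ^ (p.1.card + if p.2 then 1 else 0)
      * X 2 ^ (nullity (G.subMat p.1) + if loop = p.2 then 1 else 0)
  have hterm : ∀ S : Finset V, ∑ b, term (S, b)
      = (if loop then X 0 + X 1 * X 2 else X 0 * X 2 + X 1)
        * (X 0 ^ (Fintype.card V - S.card) * X 1 ^ S.card * X 2 ^ nullity (G.subMat S)) := by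
    intro S
    have hsub : Fintype.card V + 1 - S.card = Fintype.card V - S.card + 1 := by
      have := S.card_le_univ
      omega
    cases loop <;> simp [term, hsub] <;> ring
  unfold bracket
  rw [Fintype.sum_equiv optionEquivProdBool _ term fun T => by
      simp [term, optionEquivProdBool, Fintype.card_option, ← card_eq_card_eraseNone_add_ite,
        nullity_subMat_addIsolated],
    Fintype.sum_prod_type, Finset.sum_congr rfl fun S _ => hterm S, ← mul_sum]
  simp only [addIsolated]
  ring

lemma numLoops_addIsolated :
    (G.addIsolated loop).numLoops = G.numLoops + if loop then 1 else 0 := by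
  rw [numLoops, numLoops, card_filter, card_filter, Fintype.sum_option]
  cases loop <;> simp [addIsolated, add_comm]

end MarkedGraph

section JonesSubstitution

open LaurentPolynomial

lemma aeval_X0_mul_X2_add_X1 :
    aeval ![(T (-1) : LaurentPolynomial ℤ), T 1, -T 2 - T (-2)]
      (X 0 * X 2 + X 1 : MvPolynomial (Fin 3) ℤ) = -T (-3) := by
  simp only [map_add, map_mul, aeval_X, Matrix.cons_val_zero, Matrix.cons_val_one,
    Matrix.cons_val_two, Matrix.head_cons, Matrix.tail_cons]
  rw [mul_sub, mul_neg, ← T_add, ← T_add]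
  norm_num
  abel

lemma aeval_X0_add_X1_mul_X2 :
    aeval ![(T (-1) : LaurentPolynomial ℤ), T 1, -T 2 - T (-2)]
      (X 0 + X 1 * X 2 : MvPolynomial (Fin 3) ℤ) = -T 3 := by
  simp only [map_add, map_mul, aeval_X, Matrix.cons_val_zero, Matrix.cons_val_one,
    Matrix.cons_val_two, Matrix.head_cons, Matrix.tail_cons]
  rw [mul_sub, mul_neg, ← T_add, ← T_add]
  norm_num

lemma neg_one_pow_succ_mul_T_add_mul_neg_T (n : ℕ) {k m m' : ℤ} (h : m + m' = 0)
    (E : LaurentPolynomial ℤ) :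
    (-1) ^ (n + 1) * T (k + m) * (-T m' * E) = (-1) ^ n * T k * E := by
  have hT : (T m * T m' : LaurentPolynomial ℤ) = 1 := by rw [← T_add, h, T_zero]
  rw [T_add]
  linear_combination (-1) ^ n * T k * E * hT

end JonesSubstitution

theorem jones_omega1_general {V : Type} [Fintype V] [DecidableEq V]
    (G : MarkedGraph V) (loop : Bool) :
    (G.addIsolated loop).jones = G.jones := by
  unfold MarkedGraph.jones
  rw [MarkedGraph.bracket_addIsolated, map_mul, MarkedGraph.numLoops_addIsolated,
    Fintype.card_option]
  cases loop
  · simp only [Bool.false_eq_true, if_false, add_zero, aeval_X0_mul_X2_add_X1]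
    rw [show 3 * ((Fintype.card V + 1 : ℕ) : ℤ) - 6 * G.numLoops
        = 3 * Fintype.card V - 6 * G.numLoops + 3 by push_cast; ring]
    exact neg_one_pow_succ_mul_T_add_mul_neg_T _ (by norm_num) _
  · simp only [if_true, aeval_X0_add_X1_mul_X2]
    rw [show 3 * ((Fintype.card V + 1 : ℕ) : ℤ) - 6 * ((G.numLoops + 1 : ℕ) : ℤ)
        = 3 * Fintype.card V - 6 * G.numLoops + -3 by push_cast; ring]
    exact neg_one_pow_succ_mul_T_add_mul_neg_T _ (by norm_num) _

/-- The Jones polynomial is invariant under the Ω.1 move of adjoining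
an isolated, unmarked vertex (looped or unlooped). -/
theorem jones_omega1 {V : Type} [Fintype V] [DecidableEq V]
    (G : MarkedGraph V) (hsym : G.adj.IsSymm) (loop : Bool) :
    (G.addIsolated loop).jones = G.jones :=
  jones_omega1_general G loop
end
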